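/- Let k ≥ 3 be an odd integer and t a positive integer. Let G be any connected simple graph having a cut vertex r such that G − r has exactly k connected components, each containing exactly t vertices and each joined to r by exactly one edge. Then the undirected optical index of G is at least k·t^2. -/

import Mathlib

/-!
A path between two different branches of `G - r` passes through `r`, hence uses the unique
edge joining each of the two branches to `r`; so two such paths with a branch in common
conflict. A colour class of crossing paths therefore touches every branch at most once, i.e.
it is a matching on the `k` branches, of size at most `(k - 1) / 2` because `k` is odd. As there
are `k (k - 1) / 2 · t²` crossing paths, at least `k t²` colours are needed.
-/

open SimpleGraph

/-- An all-to-all routing in a simple graph `G`: a choice of one path between each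
(unordered) pair of vertices. -/
structure Routing {V : Type*} (G : SimpleGraph V) where
  path : ∀ u v : V, G.Walk u v
  isPath : ∀ u v : V, (path u v).IsPath
  symm : ∀ u v : V, path v u = (path u v).reverse

/-- The conflict graph of a routing: vertices are unordered pairs of distinct vertices of `G`
(i.e. the paths of the routing), two of them adjacent iff the corresponding paths share an
edge. -/
def Routing.conflictGraph {V : Type*} {G : SimpleGraph V} (R : Routing G) :
    SimpleGraph {p : Sym2 V // ¬ p.IsDiag} where
  Adj p q := p ≠ q ∧ ∃ (u v u' v' : V) (e : Sym2 V),
      (p : Sym2 V) = s(u, v) ∧ (q : Sym2 V) = s(u', v') ∧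
      e ∈ (R.path u v).edges ∧ e ∈ (R.path u' v').edges
  symm := by
    constructor
    rintro p q ⟨hne, u, v, u', v', e, hp, hq, h1, h2⟩
    exact ⟨hne.symm, u', v', u, v, e, hq, hp, h2, h1⟩
  loopless := by
    constructor
    rintro p ⟨hne, -⟩
    exact hne rfl

/-- The undirected optical index `w(G)`: the minimum over all all-to-all routings `R`
of the chromatic number of the conflict graph `Q(R)`. -/
noncomputable def opticalIndex {V : Type*} (G : SimpleGraph V) : ℕ :=
  sInf {n | ∃ R : Routing G, R.conflictGraph.Colorable n}

/-- The load of an edge `e` under a routing: the number of paths of the routing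
containing `e`. -/
noncomputable def Routing.load {V : Type*} {G : SimpleGraph V} (R : Routing G)
    (e : Sym2 V) : ℕ :=
  Nat.card {p : {p : Sym2 V // ¬ p.IsDiag} //
    ∃ u v : V, (p : Sym2 V) = s(u, v) ∧ e ∈ (R.path u v).edges}

/-- The edge-forwarding index `π(G)`: the minimum over all all-to-all routings of the
maximum edge load. -/
noncomputable def forwardingIndex {V : Type*} (G : SimpleGraph V) : ℕ :=
  sInf {n | ∃ R : Routing G, ∀ e ∈ G.edgeSet, R.load e ≤ n}

/-- The complete `m`-ary tree of height `h`: vertices are words over `Fin m` of length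
at most `h` (the root is the empty word), a vertex being adjacent to its parent. -/
def completeMAryTree (m h : ℕ) : SimpleGraph {l : List (Fin m) // l.length ≤ h} where
  Adj x y := (∃ a : Fin m, x.val = a :: y.val) ∨ (∃ a : Fin m, y.val = a :: x.val)
  symm := ⟨fun x y hxy => Or.symm hxy⟩
  loopless := by
    constructor
    rintro x (⟨a, ha⟩ | ⟨a, ha⟩) <;> exact List.cons_ne_self a x.val ha.symm

/-- The tree `D_{m,h}`: two disjoint copies of the complete `m`-ary tree of height `h-1`
with an edge joining the two roots. -/
def doubleMAryTree (m h : ℕ) :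
    SimpleGraph (Bool × {l : List (Fin m) // l.length ≤ h - 1}) where
  Adj x y := (x.1 = y.1 ∧ ((∃ a : Fin m, x.2.val = a :: y.2.val) ∨
      (∃ a : Fin m, y.2.val = a :: x.2.val)))
    ∨ (x.1 ≠ y.1 ∧ x.2.val = [] ∧ y.2.val = [])
  symm := by
    constructor
    rintro x y (⟨hb, hxy⟩ | ⟨hb, h1, h2⟩)
    · exact Or.inl ⟨hb.symm, Or.symm hxy⟩
    · exact Or.inr ⟨hb.symm, h2, h1⟩
  loopless := by
    constructor
    rintro x (⟨-, (⟨a, ha⟩ | ⟨a, ha⟩)⟩ | ⟨hb, -⟩)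
    · exact List.cons_ne_self a _ ha.symm
    · exact List.cons_ne_self a _ ha.symm
    · exact hb rfl
open Finset

theorem Finset.even_card_of_involution {α : Type*} {s : Finset α} (σ : α → α)
    (hmem : ∀ a ∈ s, σ a ∈ s) (hσ : ∀ a ∈ s, σ (σ a) = a) (hfix : ∀ a ∈ s, σ a ≠ a) :
    Even #s := by
  rw [← ZMod.natCast_eq_zero_iff_even, Finset.card_eq_sum_ones, Nat.cast_sum]
  exact Finset.sum_involution (fun a _ => σ a) (fun _ _ => by decide)
    (fun a ha _ => hfix a ha) hmem hσ

theorem Nat.card_le_pred_mul_of_involutive {O K β : Type*} [Finite O] [Finite β]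
    {σ : O → O} (hσ : Function.Involutive σ) (hfix : ∀ o, σ o ≠ o)
    {F : O → β} (hF : ∀ o, F (σ o) = F o) {g : O → K}
    (hinj : ∀ o o', F o = F o' → g o = g o' → o = o') (hK : Odd (Nat.card K)) :
    Nat.card O ≤ (Nat.card K - 1) * Nat.card β := by
  classical
  have : Finite K := Nat.finite_of_card_ne_zero hK.pos.ne'
  have := Fintype.ofFinite O
  have := Fintype.ofFinite K
  have := Fintype.ofFinite β
  simp only [Nat.card_eq_fintype_card] at hK ⊢
  refine Finset.card_le_mul_card_image_of_maps_to (f := F) (fun _ _ => Finset.mem_univ _) _ ?_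
  intro b _
  have hle : #{o | F o = b} ≤ Fintype.card K :=
    Finset.card_le_card_of_injOn g (fun _ _ => Finset.mem_univ _) fun o ho o' ho' hg =>
      hinj o o' ((Finset.mem_filter.1 ho).2.trans (Finset.mem_filter.1 ho').2.symm) hg
  have heven : Even #{o | F o = b} :=
    Finset.even_card_of_involution σ (by simp [hF]) (fun o _ => hσ o) (fun o _ => hfix o)
  obtain ⟨m, hm⟩ := hK
  obtain ⟨j, hj⟩ := heven
  omega

theorem Nat.card_pairs_ne_of_card_fiber {U K : Type*} [Finite U] [Finite K] (f : U → K) {t : ℕ}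
    (hf : ∀ c, Nat.card {u // f u = c} = t) :
    Nat.card {o : U × U // f o.1 ≠ f o.2} = Nat.card K * (Nat.card K - 1) * t ^ 2 := by
  classical
  have := Fintype.ofFinite U
  have := Fintype.ofFinite K
  simp only [Nat.card_eq_fintype_card] at hf ⊢
  have hU : Fintype.card U = Fintype.card K * t := by
    rw [Fintype.card_congr (Equiv.sigmaFiberEquiv f).symm, Fintype.card_sigma]
    simp [hf, mul_comm]
  have hfiber : ∀ u, Fintype.card {v // f u ≠ f v} = Fintype.card U - t := fun u => by
    rw [Fintype.card_subtype_compl, ← hf (f u)]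
    simp_rw [eq_comm]
  rw [Fintype.card_congr (Equiv.subtypeProdEquivSigmaSubtype fun u v => f u ≠ f v),
    Fintype.card_sigma]
  simp only [hfiber, Finset.sum_const, Finset.card_univ, smul_eq_mul, hU,
    ← Nat.sub_one_mul]
  ring

theorem SimpleGraph.Connected.nonempty_routing {V : Type*} {G : SimpleGraph V}
    (hG : G.Connected) : Nonempty (Routing G) := by
  classical
  let _ : LinearOrder V := linearOrderOfSTO WellOrderingRel
  refine ⟨{ path := fun u v => if u ≤ v then (hG.preconnected u v).some.bypass
                else (hG.preconnected v u).some.bypass.reverse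
            isPath := fun u v => ?_
            symm := fun u v => ?_ }⟩
  · split
    · exact Walk.bypass_isPath _
    · exact (Walk.bypass_isPath _).reverse
  · rcases lt_trichotomy u v with h | rfl | h
    · simp [h.le, not_le.2 h]
    · have := (Walk.isPath_iff_nil.1 (Walk.bypass_isPath (hG.preconnected u u).some)).eq_nil
      simp [this]
    · simp [h.le, not_le.2 h]

theorem le_opticalIndex {V : Type*} [Finite V] {G : SimpleGraph V} (hG : G.Connected) {m : ℕ}
    (h : ∀ (R : Routing G) (n : ℕ), R.conflictGraph.Colorable n → m ≤ n) :
    m ≤ opticalIndex G := by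
  obtain ⟨R⟩ := hG.nonempty_routing
  have := Fintype.ofFinite {p : Sym2 V // ¬ p.IsDiag}
  exact le_csInf ⟨_, R, R.conflictGraph.colorable_of_fintype⟩ fun n ⟨R, hR⟩ => h R n hR

section CutVertex

variable {V : Type*} {G : SimpleGraph V} {r : V}

local notation "branch" => connectedComponentMk (induce (Set.ofPred fun v => v ≠ r) G)

theorem SimpleGraph.Walk.exists_adj_mem_edges_of_leaves_branch {x y : V} (p : G.Walk x y)
    (hx : x ≠ r) (hy : ∀ hy : y ≠ r, branch ⟨y, hy⟩ ≠ branch ⟨x, hx⟩) :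
    ∃ w : {v : V // v ≠ r}, G.Adj r w ∧ branch w = branch ⟨x, hx⟩ ∧ s(r, w) ∈ p.edges := by
  induction p with
  | nil => exact absurd rfl (hy hx)
  | @cons x z y h q ih =>
    by_cases hz : z = r
    · subst hz
      exact ⟨⟨x, hx⟩, h.symm, rfl, by simp [Sym2.eq_swap]⟩
    · have hxz : branch ⟨x, hx⟩ = branch ⟨z, hz⟩ :=
        ConnectedComponent.sound (show (G.induce {v | v ≠ r}).Adj ⟨x, hx⟩ ⟨z, hz⟩ from h).reachable
      obtain ⟨w, hrw, hw, hmem⟩ := ih hz fun hy' => hxz ▸ hy hy'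
      exact ⟨w, hrw, hw.trans hxz.symm, List.mem_cons_of_mem _ hmem⟩

theorem Routing.exists_common_edge_of_crossing (R : Routing G)
    (hunique : ∀ w w' : {v : V // v ≠ r}, G.Adj r w → G.Adj r w' → branch w = branch w' → w = w')
    {u v u' v' : {v : V // v ≠ r}} (huv : branch u ≠ branch v) (huv' : branch u' ≠ branch v')
    (hu : branch u = branch u') :
    ∃ e, e ∈ (R.path u v).edges ∧ e ∈ (R.path u' v').edges := by
  obtain ⟨w, hrw, hw, hmem⟩ :=
    (R.path u v).exists_adj_mem_edges_of_leaves_branch u.2 fun _ => huv.symm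
  obtain ⟨w', hrw', hw', hmem'⟩ :=
    (R.path u' v').exists_adj_mem_edges_of_leaves_branch u'.2 fun _ => huv'.symm
  obtain rfl := hunique w w' hrw hrw' (hw.trans (hu.trans hw'.symm))
  exact ⟨_, hmem, hmem'⟩

/-- Ordered crossing pairs are counted, so that each colour class is paired up by swapping. -/
theorem Routing.card_crossingPairs_le_of_coloring [Finite V] (R : Routing G) {β : Type*}
    [Finite β] (C : R.conflictGraph.Coloring β)
    (hunique : ∀ w w' : {v : V // v ≠ r}, G.Adj r w → G.Adj r w' → branch w = branch w' → w = w')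
    (hodd : Odd (Nat.card (G.induce {v | v ≠ r}).ConnectedComponent)) :
    Nat.card {o : {v : V // v ≠ r} × {v : V // v ≠ r} // branch o.1 ≠ branch o.2} ≤
      (Nat.card (G.induce {v | v ≠ r}).ConnectedComponent - 1) * Nat.card β := by
  refine Nat.card_le_pred_mul_of_involutive (σ := fun o => ⟨o.1.swap, Ne.symm o.2⟩)
    (F := fun o => C ⟨s(o.1.1.1, o.1.2.1), fun h =>
      o.2 (congrArg _ (Subtype.ext (Sym2.mk_isDiag_iff.1 h)))⟩)
    (g := fun o => branch o.1.1)
    (fun _ => rfl) (fun o h => o.2 ?_) (fun _ => congrArg C (Subtype.ext Sym2.eq_swap)) ?_ hodd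
  · exact (congrArg (fun o => branch o.1.1) h).symm
  rintro ⟨⟨u, v⟩, huv⟩ ⟨⟨u', v'⟩, huv'⟩ hC hu
  have hpair : s(u.1, v.1) = s(u'.1, v'.1) := by
    by_contra hne
    obtain ⟨e, he, he'⟩ := R.exists_common_edge_of_crossing hunique huv huv' hu
    exact C.valid ⟨fun h => hne (congrArg Subtype.val h), u, v, u', v', e, rfl, rfl, he, he'⟩ hC
  rcases Sym2.eq_iff.1 hpair with ⟨h1, h2⟩ | ⟨-, h2⟩
  · obtain rfl : u = u' := Subtype.ext h1
    obtain rfl : v = v' := Subtype.ext h2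
    rfl
  · obtain rfl : v = u' := Subtype.ext h2
    exact absurd hu huv

end CutVertex

theorem opticalIndex_G_kt_lower_general {V : Type*} [Fintype V] (G : SimpleGraph V) (hG : G.Connected)
    (k t : ℕ) (hk : 3 ≤ k) (hkodd : Odd k) (r : V)
    (hcomp : Nat.card (G.induce {v | v ≠ r}).ConnectedComponent = k)
    (hsize : ∀ c : (G.induce {v | v ≠ r}).ConnectedComponent, Nat.card c.supp = t)
    (hedge : ∀ c : (G.induce {v | v ≠ r}).ConnectedComponent,
      Nat.card {v : {v : V // v ≠ r} | v ∈ c.supp ∧ G.Adj r v.val} = 1) :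
    k * t ^ 2 ≤ opticalIndex G := by
  have hunique : ∀ w w' : {v : V // v ≠ r}, G.Adj r w → G.Adj r w' →
      (G.induce {v | v ≠ r}).connectedComponentMk w =
        (G.induce {v | v ≠ r}).connectedComponentMk w' → w = w' := fun w w' hw hw' h =>
    (Set.subsingleton_coe _).1 (Nat.card_eq_one_iff_unique.1 (hedge _)).1 ⟨rfl, hw⟩ ⟨h.symm, hw'⟩
  refine le_opticalIndex hG fun R n ⟨C⟩ => ?_
  have hbound := (Nat.card_pairs_ne_of_card_fiber _ hsize).symm.trans_le
    (R.card_crossingPairs_le_of_coloring C hunique (hcomp ▸ hkodd))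
  rw [hcomp, Nat.card_fin, mul_comm k, mul_assoc] at hbound
  exact Nat.le_of_mul_le_mul_left hbound (by omega)

/-- if `k ≥ 3` is odd, `t ≥ 1`, and `G` is a connected simple graph with a
cut vertex `r` such that `G − r` has exactly `k` connected components, each with exactly
`t` vertices and each joined to `r` by exactly one edge, then `w(G) ≥ k·t²`. -/
theorem opticalIndex_G_kt_lower {V : Type*} [Fintype V] (G : SimpleGraph V) (hG : G.Connected)
    (k t : ℕ) (hk : 3 ≤ k) (hkodd : Odd k) (ht : 1 ≤ t) (r : V)
    (hcomp : Nat.card (G.induce {v | v ≠ r}).ConnectedComponent = k)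
    (hsize : ∀ c : (G.induce {v | v ≠ r}).ConnectedComponent, Nat.card c.supp = t)
    (hedge : ∀ c : (G.induce {v | v ≠ r}).ConnectedComponent,
      Nat.card {v : {v : V // v ≠ r} | v ∈ c.supp ∧ G.Adj r v.val} = 1) :
    k * t ^ 2 ≤ opticalIndex G :=
  opticalIndex_G_kt_lower_general G hG k t hk hkodd r hcomp hsize hedge
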